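/- arXiv:2201.03499 — 3 statements merged into one kernel-verified Lean document; each statement's English description precedes it below -/
import Mathlib

section
/- Let p and q be PMFs on β × α with Δ(p, q) ≤ ε, and let S : α → PMF β be a kernel such that q = σ_S(q.map snd), i.e., q is reproduced exactly by sampling its second marginal and then applying S to it. Then Δ(p, σ_S(p.map snd)) ≤ 2ε. (This is the distributional core of Theorem 2: if the real joint distribution of the data collector's state and the environment's view is ε-close to the ideal one, and in the ideal execution the simulator reconstructs the state exactly from the environment's view, then the simulator applied to the real view reconstructs the real state up to error 2ε, i.e., strong deletion-compliance with private/public–separable randomness implies weak deletion-compliance.) -/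
/-- Statistical distance between two PMFs: half the ℓ¹ distance. -/
noncomputable def SD {α : Type*} (p q : PMF α) : ℝ :=
  (1 / 2) * ∑' x, |(p x).toReal - (q x).toReal|

/-- `sigmaSim S v` samples `a ~ v`, then `b ~ S a`, and outputs the pair `(b, a)`. -/
noncomputable def sigmaSim {α β : Type*} (S : α → PMF β) (v : PMF α) : PMF (β × α) :=
  v.bind fun a => (S a).map fun b => (b, a)

private lemma pmf_summable {γ : Type*} (p : PMF γ) : Summable fun x => (p x).toReal :=
  ENNReal.summable_toReal (by rw [p.tsum_coe]; exact ENNReal.one_ne_top)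

private lemma pmf_tsum {γ : Type*} (p : PMF γ) : ∑' x, (p x).toReal = 1 := by
  rw [← ENNReal.tsum_toReal_eq (fun a => p.apply_ne_top a), p.tsum_coe, ENNReal.toReal_one]

private lemma absdiff_summable {γ : Type*} (p q : PMF γ) :
    Summable fun x => |(p x).toReal - (q x).toReal| := by
  refine Summable.of_nonneg_of_le (fun x => abs_nonneg _) (fun x => ?_)
    ((pmf_summable p).add (pmf_summable q))
  calc |(p x).toReal - (q x).toReal| ≤ |(p x).toReal| + |(q x).toReal| := abs_sub _ _
    _ = (p x).toReal + (q x).toReal := by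
        rw [abs_of_nonneg ENNReal.toReal_nonneg, abs_of_nonneg ENNReal.toReal_nonneg]

private lemma SD_symm {γ : Type*} (p q : PMF γ) : SD p q = SD q p := by
  unfold SD
  congr 1
  exact tsum_congr fun x => abs_sub_comm _ _

private lemma SD_triangle {γ : Type*} (p q r : PMF γ) : SD p r ≤ SD p q + SD q r := by
  unfold SD
  rw [← mul_add, ← Summable.tsum_add (absdiff_summable p q) (absdiff_summable q r)]
  have h : ∑' x, |(p x).toReal - (r x).toReal| ≤
      ∑' x, (|(p x).toReal - (q x).toReal| + |(q x).toReal - (r x).toReal|) :=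
    Summable.tsum_le_tsum (fun x => abs_sub_le _ _ _) (absdiff_summable p r)
      ((absdiff_summable p q).add (absdiff_summable q r))
  linarith

/-- Pure real-valued double-sum lemma. -/
private lemma double_sum_aux {γ δ : Type*} (D : γ → ℝ) (g : γ → δ → ℝ)
    (hDnn : ∀ a, 0 ≤ D a) (hgnn : ∀ a b, 0 ≤ g a b) (hD : Summable D)
    (hgs : ∀ a, Summable (g a)) (hg1 : ∀ a, ∑' b, g a b = 1) :
    Summable (fun b => ∑' a, D a * g a b) ∧
      ∑' b, ∑' a, D a * g a b = ∑' a, D a := by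
  have hF : Summable (fun ab : γ × δ => D ab.1 * g ab.1 ab.2) := by
    refine (summable_prod_of_nonneg
      (fun x => mul_nonneg (hDnn _) (hgnn _ _))).2 ⟨fun a => (hgs a).mul_left (D a), ?_⟩
    have he : (fun a => ∑' b, D a * g a b) = D := by
      funext a; rw [tsum_mul_left, hg1 a, mul_one]
    rw [he]; exact hD
  refine ⟨hF.prod_symm.prod, ?_⟩
  rw [Summable.tsum_comm (f := fun a b => D a * g a b) hF]
  exact tsum_congr fun a => by rw [tsum_mul_left, hg1 a, mul_one]

private lemma SD_bind_le {γ δ : Type*} (v w : PMF γ) (f : γ → PMF δ) :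
    SD (v.bind f) (w.bind f) ≤ SD v w := by
  unfold SD
  set g : γ → δ → ℝ := fun a b => (f a b).toReal with hgdef
  set D : γ → ℝ := fun a => |(v a).toReal - (w a).toReal| with hDdef
  have hDnn : ∀ a, 0 ≤ D a := fun a => abs_nonneg _
  have hD : Summable D := absdiff_summable v w
  have hgnn : ∀ a b, 0 ≤ g a b := fun a b => ENNReal.toReal_nonneg
  have hgs : ∀ a, Summable (g a) := fun a => pmf_summable (f a)
  have hg1 : ∀ a, ∑' b, g a b = 1 := fun a => pmf_tsum (f a)
  have hle1 : ∀ a b, g a b ≤ 1 := fun a b =>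
    (Summable.le_tsum (hgs a) b (fun c _ => hgnn a c)).trans_eq (hg1 a)
  obtain ⟨hSb, hEq⟩ := double_sum_aux D g hDnn hgnn hD hgs hg1
  have hb : ∀ (u : PMF γ) (b : δ), ((u.bind f) b).toReal = ∑' a, (u a).toReal * g a b := by
    intro u b
    rw [PMF.bind_apply, ENNReal.tsum_toReal_eq (fun a => ENNReal.mul_ne_top (u.apply_ne_top a)
      ((f a).apply_ne_top b))]
    exact tsum_congr fun a => ENNReal.toReal_mul
  have hsum : ∀ (u : PMF γ) (b : δ), Summable fun a => (u a).toReal * g a b := by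
    intro u b
    refine Summable.of_nonneg_of_le
      (fun a => mul_nonneg ENNReal.toReal_nonneg (hgnn a b)) (fun a => ?_) (pmf_summable u)
    exact mul_le_of_le_one_right ENNReal.toReal_nonneg (hle1 a b)
  have key : ∀ b, |((v.bind f) b).toReal - ((w.bind f) b).toReal| ≤ ∑' a, D a * g a b := by
    intro b
    rw [hb v b, hb w b, ← Summable.tsum_sub (hsum v b) (hsum w b)]
    have hptw : ∀ a, |(v a).toReal * g a b - (w a).toReal * g a b| = D a * g a b := by
      intro a
      rw [← sub_mul, abs_mul, abs_of_nonneg (hgnn a b)]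
    have hs2 : Summable fun a => |(v a).toReal * g a b - (w a).toReal * g a b| := by
      refine Summable.of_nonneg_of_le (fun a => abs_nonneg _) (fun a => ?_) hD
      rw [hptw a]
      exact mul_le_of_le_one_right (hDnn a) (hle1 a b)
    calc |∑' a, ((v a).toReal * g a b - (w a).toReal * g a b)|
        ≤ ∑' a, |(v a).toReal * g a b - (w a).toReal * g a b| := by
          have h := norm_tsum_le_tsum_norm
            (f := fun a => (v a).toReal * g a b - (w a).toReal * g a b)
            (by simpa [Real.norm_eq_abs] using hs2)
          simpa [Real.norm_eq_abs] using h
      _ = ∑' a, D a * g a b := tsum_congr hptw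
  have hmono : ∑' b, |((v.bind f) b).toReal - ((w.bind f) b).toReal| ≤
      ∑' b, ∑' a, D a * g a b :=
    Summable.tsum_le_tsum key (absdiff_summable _ _) hSb
  rw [hEq] at hmono
  linarith

private lemma SD_map_le {γ δ : Type*} (p q : PMF γ) (g : γ → δ) :
    SD (p.map g) (q.map g) ≤ SD p q :=
  SD_bind_le p q _

/-- If the real joint distribution `p` of (state, view) is ε-close to the ideal one `q`,
and in the ideal execution the simulator `S` reconstructs the state exactly from the view
(`q = σ_S(q.map snd)`), then the simulator applied to the real view reconstructs the real
state up to error `2ε`. -/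
theorem weak_from_strong {α β : Type*} [Countable α] [Countable β]
    (p q : PMF (β × α)) (S : α → PMF β) (ε : ℝ)
    (hpq : SD p q ≤ ε)
    (hq : q = sigmaSim S (q.map Prod.snd)) :
    SD p (sigmaSim S (p.map Prod.snd)) ≤ 2 * ε := by
  have h1 : SD p (sigmaSim S (p.map Prod.snd)) ≤
      SD p q + SD q (sigmaSim S (p.map Prod.snd)) := SD_triangle _ _ _
  have h2 : SD q (sigmaSim S (p.map Prod.snd)) =
      SD (sigmaSim S (q.map Prod.snd)) (sigmaSim S (p.map Prod.snd)) := by rw [← hq]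
  have h3 : SD (sigmaSim S (q.map Prod.snd)) (sigmaSim S (p.map Prod.snd)) ≤
      SD (q.map Prod.snd) (p.map Prod.snd) := SD_bind_le _ _ _
  have h4 : SD (q.map Prod.snd) (p.map Prod.snd) ≤ SD q p := SD_map_le _ _ _
  rw [SD_symm q p] at h4
  linarith
end

section
/- Assume the implementation (M, A, abs, Op) is strongly history independent (deterministic form), and let p_D be a deletion operation for the operation p. Then for all lists of operations R, S, T and every memory representation a : M, run(R ++ [p] ++ S ++ [p_D] ++ T)(a) = run(R ++ S ++ T)(a). That is, executing an operation and later its deletion operation leaves the memory representation exactly as if neither had ever been executed. -/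
/-- Run a list of operations on a memory representation, given the concrete map of
each operation. -/
def runOps {M Op : Type*} (conc : Op → M → M) (L : List Op) (m : M) : M :=
  L.foldl (fun m o => conc o m) m

/-- Run a list of operations on an abstract state, given the abstract map of each
operation. -/
def RunOps {A Op : Type*} (absMap : Op → A → A) (L : List Op) (a : A) : A :=
  L.foldl (fun a o => absMap o a) a

/-- Strong history independence (deterministic form): two sequences of operations leading
to the same abstract state from a given memory representation lead to the same memory
representation. -/
def StronglyHI {M A Op : Type*} (abs : M → A) (conc : Op → M → M)
    (absMap : Op → A → A) : Prop :=
  ∀ (S T : List Op) (a : M),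
    RunOps absMap S (abs a) = RunOps absMap T (abs a) →
    runOps conc S a = runOps conc T a

/-- `pD` is a deletion operation for `p`: abstractly, inserting `p` and later `pD`
is the same as doing neither. -/
def IsDeletionOp {A Op : Type*} (absMap : Op → A → A) (p pD : Op) : Prop :=
  ∀ (R S T : List Op) (x : A),
    RunOps absMap (R ++ [p] ++ S ++ [pD] ++ T) x = RunOps absMap (R ++ S ++ T) x

/-- In a strongly history independent implementation, executing an operation and later
its deletion operation leaves the memory representation exactly as if neither had ever
been executed. -/
theorem deletion_erases_memory {M A Op : Type*}
    (abs : M → A) (conc : Op → M → M) (absMap : Op → A → A)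
    (hcomm : ∀ (o : Op) (m : M), abs (conc o m) = absMap o (abs m))
    (hHI : StronglyHI abs conc absMap)
    (p pD : Op) (hdel : IsDeletionOp absMap p pD)
    (R S T : List Op) (a : M) :
    runOps conc (R ++ [p] ++ S ++ [pD] ++ T) a = runOps conc (R ++ S ++ T) a := by
  exact hHI _ _ a (hdel R S T (abs a))
end

section
/- Let K be a type with decidable equality and V a type. Let l be a list over K × V in which no entry has first component k, and let S be a list of operations, each of the form post(k', m') or del(k'), such that every operation in S has key k' ≠ k. Then del(k)(run(S)(post(k, m)(l))) = run(S)(l). That is, posting the message (k, m), then performing any sequence of posts and deletions not involving key k, and finally deleting key k yields exactly the same list as never having posted (k, m) at all. (This is the combinatorial core of Theorem 4: the append-based list with key-based removal behaves history-independently with respect to matched post/delete pairs, so the message-board data collector of Fig. 2 built on a history-independent list is weakly deletion-compliant.) -/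
/-- Operations of the message-board data collector: post a (key, message) pair or
delete the entry with a given key. -/
inductive MBOp (K V : Type*) where
  | post (k : K) (m : V) : MBOp K V
  | del (k : K) : MBOp K V

/-- The key involved in an operation. -/
def MBOp.key {K V : Type*} : MBOp K V → K
  | .post k _ => k
  | .del k => k

/-- Apply one operation to the list state: `post k m` appends `(k, m)`; `del k` removes
the first entry whose first component is `k` (and does nothing if there is none). -/
def MBOp.apply {K V : Type*} [DecidableEq K] : MBOp K V → List (K × V) → List (K × V)
  | .post k m, l => l ++ [(k, m)]
  | .del k, l => l.eraseP (fun e => decide (e.1 = k))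

/-- Run a list of operations in order. -/
def runMB {K V : Type*} [DecidableEq K] (S : List (MBOp K V)) (l : List (K × V)) :
    List (K × V) :=
  S.foldl (fun l op => op.apply l) l

private theorem aux_run_del {K V : Type*} [DecidableEq K]
    (k : K) (m : V) (S : List (MBOp K V)) :
    ∀ l1 l2 : List (K × V),
    (∀ e ∈ l1, e.1 ≠ k) →
    (∀ op ∈ S, op.key ≠ k) →
    (runMB S (l1 ++ (k, m) :: l2)).eraseP (fun e => decide (e.1 = k))
      = runMB S (l1 ++ l2) := by
  induction S with
  | nil =>
    intro l1 l2 h1 _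
    simp only [runMB, List.foldl_nil]
    rw [List.eraseP_append_right, List.eraseP_cons_of_pos]
    · simp
    · intro b hb
      simp [h1 b hb]
  | cons op S ih =>
    intro l1 l2 h1 hS
    have hopk : op.key ≠ k := hS op List.mem_cons_self
    have hS' : ∀ op ∈ S, op.key ≠ k := fun o ho => hS o (List.mem_cons_of_mem _ ho)
    simp only [runMB, List.foldl_cons] at *
    cases op with
    | post k' m' =>
      have : (l1 ++ (k, m) :: l2) ++ [(k', m')] = l1 ++ (k, m) :: (l2 ++ [(k', m')]) := by
        simp
      simp only [MBOp.apply, this, List.append_assoc, List.cons_append]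
      exact ih l1 (l2 ++ [(k', m')]) h1 hS'
    | del k' =>
      have hk' : k' ≠ k := hopk
      simp only [MBOp.apply]
      by_cases hex : ∃ a ∈ l1, (fun e : K × V => decide (e.1 = k')) a = true
      · obtain ⟨a, ha, hpa⟩ := hex
        rw [List.eraseP_append_left (p := fun e => decide (e.1 = k')) hpa _ ha, List.eraseP_append_left (p := fun e => decide (e.1 = k')) hpa _ ha]
        have h1' : ∀ e ∈ l1.eraseP (fun e => decide (e.1 = k')), e.1 ≠ k :=
          fun e he => h1 e (List.mem_of_mem_eraseP he)
        exact ih _ l2 h1' hS'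
      · push_neg at hex
        have hne : ∀ b ∈ l1, ¬ ((fun e : K × V => decide (e.1 = k')) b = true) := by
          intro b hb h
          exact hex b hb h
        rw [List.eraseP_append_right _ hne, List.eraseP_append_right _ hne,
          List.eraseP_cons_of_neg]
        · exact ih l1 _ h1 hS'
        · simp [hk'.symm]

/-- Posting `(k, m)`, then performing any sequence of posts and deletions not involving
key `k`, and finally deleting key `k`, yields exactly the same list as never having
posted `(k, m)` at all. -/
theorem post_run_del_eq_run {K V : Type*} [DecidableEq K]
    (k : K) (m : V) (l : List (K × V)) (S : List (MBOp K V))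
    (hl : ∀ e ∈ l, e.1 ≠ k)
    (hS : ∀ op ∈ S, op.key ≠ k) :
    (MBOp.del k).apply (runMB S ((MBOp.post k m).apply l)) = runMB S l := by
  have := aux_run_del k m S l [] hl hS
  simpa [MBOp.apply] using this
end
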